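/- arXiv:1206.1387 — 2 statements merged into one kernel-verified Lean document; each statement's English description precedes it below -/
import Mathlib

section
/- Let l ≥ 1 and let e_{−1}, e_0, …, e_{l−1} ∈ Σ_p(D) (not necessarily distinct) with e_{−1} = e_{l−1} and V(e_i, e_{i−1}) ≠ ∅ for all 0 ≤ i ≤ l−1. For each 0 ≤ i ≤ l−1 choose V_i = (v_{i,d})_{d∈D} ∈ V(e_i, e_{i−1}). Then U = (u_d) defined by u_d := Σ_{i=0}^{l−1} p^i·v_{i,d} is a minimal element of E_{D,p}(l), and its support satisfies φ_U(i) = e_{l−1−i} for every 0 ≤ i ≤ l−1. -/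
open scoped BigOperators
open scoped Classical

/-- `sp p u` is the sum of the base-`p` digits of `u`. -/
def sp (p u : ℕ) : ℕ := (Nat.digits p u).sum

variable {ι : Type} [Fintype ι]

/-- The coordinatewise sum `Σ_{d ∈ D} u_d · d`. -/
def sigmaSum (D : Finset (ι → ℕ)) (U : D → ℕ) (k : ι) : ℕ :=
  ∑ d, U d * (d : ι → ℕ) k

/-- Membership in the set `E_{D,p}(r)`. -/
def memE (p : ℕ) (D : Finset (ι → ℕ)) (r : ℕ) (U : D → ℕ) : Prop :=
  (∀ d, U d ≤ p ^ r - 1) ∧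
  (∀ k, (p ^ r - 1) ∣ sigmaSum D U k ∧ 0 < sigmaSum D U k)

/-- The `p`-weight `s_p(U)` of a tuple `U`. -/
def spU (p : ℕ) (D : Finset (ι → ℕ)) (U : D → ℕ) : ℕ := ∑ d, sp p (U d)

/-- `s_{D,p}(r)`, the minimal `p`-weight of an element of `E_{D,p}(r)`. -/
noncomputable def sDp (p : ℕ) (D : Finset (ι → ℕ)) (r : ℕ) : ℕ :=
  sInf { s | ∃ U : D → ℕ, memE p D r U ∧ spU p D U = s }

/-- The `p`-density `δ_p(D)` of the set `D`. -/
noncomputable def density (p : ℕ) (D : Finset (ι → ℕ)) : ℝ :=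
  (1 / ((p : ℝ) - 1)) * sInf { x : ℝ | ∃ r : ℕ, 1 ≤ r ∧ x = (sDp p D r : ℝ) / (r : ℝ) }

/-- A minimal solution in `E_{D,p}(r)`. -/
def minimalSol (p : ℕ) (D : Finset (ι → ℕ)) (r : ℕ) (U : D → ℕ) : Prop :=
  memE p D r U ∧ (spU p D U : ℝ) = ((p : ℝ) - 1) * (r : ℝ) * density p D

/-- `φ_r(U) = (1/(p^r − 1)) Σ_{d ∈ D} u_d · d`. -/
def phiMap (p : ℕ) (D : Finset (ι → ℕ)) (r : ℕ) (U : D → ℕ) (k : ι) : ℕ :=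
  sigmaSum D U k / (p ^ r - 1)

/-- The shift `δ_r` on `{0, …, p^r − 1}`. -/
def shiftFun (p r u : ℕ) : ℕ := if u = p ^ r - 1 then u else (p * u) % (p ^ r - 1)

/-- The componentwise action of the shift `δ_r` on tuples. -/
def shiftE (p : ℕ) (D : Finset (ι → ℕ)) (r : ℕ) (U : D → ℕ) : D → ℕ :=
  fun d => shiftFun p r (U d)

/-- The support `φ_U : ℤ/rℤ → ℕ^n` of a solution `U ∈ E_{D,p}(r)`. -/
def suppMap (p : ℕ) (D : Finset (ι → ℕ)) (r : ℕ) (U : D → ℕ) (k : ZMod r) : ι → ℕ :=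
  phiMap p D r ((shiftE p D r)^[k.val] U)

/-- Membership in `MI_{D,p}(r)`: minimal irreducible solutions. -/
def memMI (p : ℕ) (D : Finset (ι → ℕ)) (r : ℕ) (U : D → ℕ) : Prop :=
  minimalSol p D r U ∧ Function.Injective (suppMap p D r U)

/-- The `p`-minimal support `Σ_p(D)`. -/
def minSupport (p : ℕ) (D : Finset (ι → ℕ)) : Set (ι → ℕ) :=
  { e | ∃ r : ℕ, 1 ≤ r ∧ ∃ U : D → ℕ, memMI p D r U ∧ e ∈ Set.range (suppMap p D r U) }

/-- `ψ(U)`: the tuple of last base-`p` digits of `U`. -/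
def psiMap (p : ℕ) (D : Finset (ι → ℕ)) (U : D → ℕ) : D → ℕ := fun d => U d % p

/-- The set `V(e, e')` of digit tuples of minimal irreducible solutions with
`φ_U(−1) = e` and `φ_U(0) = e'`. -/
def Vset (p : ℕ) (D : Finset (ι → ℕ)) (e e' : ι → ℕ) : Set (D → ℕ) :=
  { v | ∃ r : ℕ, 1 ≤ r ∧ ∃ U : D → ℕ, memMI p D r U ∧
      suppMap p D r U (-1) = e ∧ suppMap p D r U 0 = e' ∧ psiMap p D U = v }

/-- The weight `w(V) = Σ_{d ∈ D} v_d`. -/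
def weightV (D : Finset (ι → ℕ)) (v : D → ℕ) : ℕ := ∑ d, v d

/-!
Each `V_i ∈ V(e_i, e_{i-1})` is the last digit tuple of a minimal solution `W_i ∈ E(s_i + 1)`
with `φ(W_i) = e_{i-1}` and `φ(δ^{s_i} W_i) = e_i`. Because `δ` multiplies by `p` and moves the
top digit to the bottom, `p • φ(δ^{s_i} W_i) = φ(W_i) + Σ_d v_{i,d} • d`: the digit tuple `V_i`
is a single step `e_{i-1} → e_i`, and the remaining digits `⌊W_i / p⌋` form a return path
`e_i → e_{i-1}` of length `s_i`. Concatenating the steps gives `U`, a closed path, so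
`U ∈ E(l)`; concatenating the return paths in reverse order gives a closed path of length
`Σ s_i`, whose weight is at least `(p - 1) δ Σ s_i`. As step and return path together weigh
`(p - 1) δ (s_i + 1)`, the weight of `U` is at most `(p - 1) δ l`. Finally `δ` rotates the
digits of `U`, so `φ(δ^j U)` runs backwards through the `e_i`.
-/

theorem sp_add_pow_mul {p r a b : ℕ} (hp : 1 < p) (ha : a < p ^ r) :
    sp p (a + p ^ r * b) = sp p a + sp p b := by
  rcases Nat.eq_zero_or_pos b with rfl | hb
  · simp [sp]
  obtain ⟨k, hk⟩ := Nat.exists_eq_add_of_le ((Nat.digits_length_le_iff hp a).mpr ha)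
  rw [sp, hk, ← Nat.digits_append_zeroes_append_digits hp hb]
  simp [sp]

theorem sum_pow_mul_lt {p n : ℕ} {a : ℕ → ℕ} (ha : ∀ i < n, a i < p) :
    ∑ i ∈ Finset.range n, p ^ i * a i < p ^ n := by
  induction n with
  | zero => simp
  | succ n ih =>
    rw [Finset.sum_range_succ, pow_succ]
    have := Nat.mul_le_mul_left (p ^ n) (ha n (by omega))
    have := ih fun i hi => ha i (by omega)
    rw [Nat.mul_succ] at *
    omega

theorem mul_add_pow_mul {p : ℕ} (hp : 0 < p) (n x t : ℕ) :
    p * (x + p ^ n * t) = p * x + t + (p ^ (n + 1) - 1) * t := by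
  have : t ≤ p ^ (n + 1) * t := Nat.le_mul_of_pos_left t (pow_pos hp _)
  rw [Nat.sub_mul, one_mul, Nat.mul_add, ← Nat.mul_assoc, ← pow_succ']
  omega

theorem shiftFun_add_pow_mul {p n x t : ℕ} (hx : x < p ^ n) (ht : t < p) :
    shiftFun p (n + 1) (x + p ^ n * t) = p * x + t := by
  rw [shiftFun, mul_add_pow_mul (by omega), pow_succ']
  generalize p ^ n = q at *
  have hpx : p * (x + 1) ≤ p * q := Nat.mul_le_mul_left p hx
  have hqt : q * (t + 1) ≤ q * p := Nat.mul_le_mul_left q ht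
  rw [Nat.mul_comm q p, Nat.mul_succ, Nat.mul_comm q t] at hqt
  rw [Nat.mul_succ] at hpx
  rw [Nat.mul_comm q t]
  split_ifs with h
  · have hx1 : x + 1 = q := by omega
    have ht1 : t + 1 = p := Nat.eq_of_mul_eq_mul_left (by omega : 0 < q)
      (by rw [Nat.mul_succ, Nat.mul_comm q t, Nat.mul_comm q p]; omega)
    subst hx1 ht1
    ring
  · have hlt : p * x + t < p * q - 1 := by
      by_contra hge
      have ht1 : t + 1 = p := by omega
      have hx1 : x + 1 = q := Nat.eq_of_mul_eq_mul_left (by omega : 0 < p)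
        (by rw [Nat.mul_succ]; omega)
      subst ht1 hx1
      have : (t + 1) * (x + 1) = x + t * (x + 1) + 1 := by ring
      omega
    rw [Nat.add_mul_mod_self_left, Nat.mod_eq_of_lt hlt]

theorem mul_eq_shiftFun_add {p n u : ℕ} (hp : 0 < p) (hu : u ≤ p ^ (n + 1) - 1) :
    p * u = shiftFun p (n + 1) u + (p ^ (n + 1) - 1) * (shiftFun p (n + 1) u % p) := by
  have hpn : 0 < p ^ n := pow_pos hp n
  have hx := Nat.mod_lt u hpn
  have ht : u / p ^ n < p := by
    rw [Nat.div_lt_iff_lt_mul hpn, ← pow_succ']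
    have := Nat.one_le_pow (n + 1) p hp
    omega
  rw [← Nat.mod_add_div u (p ^ n)]
  generalize u % p ^ n = x, u / p ^ n = t at hx ht ⊢
  rw [shiftFun_add_pow_mul hx ht, Nat.mul_add_mod_self_left, Nat.mod_eq_of_lt ht,
    mul_add_pow_mul hp]

theorem shiftFun_le {p r u : ℕ} (hu : u ≤ p ^ r - 1) : shiftFun p r u ≤ p ^ r - 1 := by
  unfold shiftFun
  split_ifs
  · exact hu
  · exact (Nat.mod_lt _ (by omega)).le

theorem shiftFun_iterate_of_lt {p r u : ℕ} (hu : u < p ^ r - 1) (k : ℕ) :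
    (shiftFun p r)^[k] u = p ^ k * u % (p ^ r - 1) := by
  induction k with
  | zero => simp [Nat.mod_eq_of_lt hu]
  | succ k ih =>
    rw [Function.iterate_succ_apply', ih, shiftFun, if_neg (Nat.mod_lt _ (by omega)).ne,
      Nat.mul_mod_mod, pow_succ', mul_assoc]

theorem shiftFun_iterate_self {p r u : ℕ} (hp : 0 < p) (hu : u ≤ p ^ r - 1) :
    (shiftFun p r)^[r] u = u := by
  rcases hu.lt_or_eq with hu | rfl
  · rw [shiftFun_iterate_of_lt hu,
      ((Nat.modEq_sub (Nat.one_le_pow r p hp)).mul_right u : p ^ r * u % _ = _), one_mul,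
      Nat.mod_eq_of_lt hu]
  · exact Function.iterate_fixed (f := shiftFun p r) (if_pos rfl) r

section Solutions

variable {ι : Type} {p : ℕ} {D : Finset (ι → ℕ)}

theorem sigmaSum_mono {V W : D → ℕ} (h : ∀ d, V d ≤ W d) (k : ι) :
    sigmaSum D V k ≤ sigmaSum D W k :=
  Finset.sum_le_sum fun d _ => Nat.mul_le_mul_right _ (h d)

theorem sigmaSum_add_mul (V W : D → ℕ) (c : ℕ) (k : ι) :
    sigmaSum D (fun d => V d + c * W d) k = sigmaSum D V k + c * sigmaSum D W k := by
  simp only [sigmaSum, add_mul, Finset.sum_add_distrib, Finset.mul_sum, mul_assoc]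

theorem shiftE_iterate_apply {r : ℕ} (W : D → ℕ) (k : ℕ) (d : D) :
    (shiftE p D r)^[k] W d = (shiftFun p r)^[k] (W d) := by
  induction k generalizing W with
  | zero => rfl
  | succ k ih => exact ih (shiftE p D r W)

theorem mul_sigmaSum_eq_shiftE {n : ℕ} (hp : 0 < p) {W : D → ℕ}
    (hW : ∀ d, W d ≤ p ^ (n + 1) - 1) (k : ι) :
    p * sigmaSum D W k = sigmaSum D (shiftE p D (n + 1) W) k
      + (p ^ (n + 1) - 1) * sigmaSum D (psiMap p D (shiftE p D (n + 1) W)) k := by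
  simp only [sigmaSum, Finset.mul_sum, ← Finset.sum_add_distrib]
  refine Finset.sum_congr rfl fun d _ => ?_
  rw [← mul_assoc, mul_eq_shiftFun_add hp (hW d)]
  simp only [shiftE, psiMap]
  ring

theorem memE.shift {n : ℕ} (hp : 0 < p) {W : D → ℕ} (hW : memE p D (n + 1) W) :
    memE p D (n + 1) (shiftE p D (n + 1) W) := by
  refine ⟨fun d => shiftFun_le (hW.1 d), fun k => ?_⟩
  have h := mul_sigmaSum_eq_shiftE hp hW.1 k
  obtain ⟨hdvd, hpos⟩ := hW.2 k
  refine ⟨(Nat.dvd_add_left (dvd_mul_right _ _)).mp (h ▸ hdvd.mul_left p),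
    Nat.pos_of_ne_zero fun h0 => ?_⟩
  have hψ : sigmaSum D (psiMap p D (shiftE p D (n + 1) W)) k = 0 :=
    Nat.eq_zero_of_le_zero (h0 ▸ sigmaSum_mono (fun d => Nat.mod_le _ _) k)
  rw [h0, hψ, mul_zero, add_zero] at h
  exact (Nat.mul_pos hp hpos).ne' h

theorem memE.iterate_shift {n : ℕ} (hp : 0 < p) {W : D → ℕ} (hW : memE p D (n + 1) W)
    (k : ℕ) : memE p D (n + 1) ((shiftE p D (n + 1))^[k] W) := by
  induction k with
  | zero => exact hW
  | succ k ih => rw [Function.iterate_succ_apply']; exact ih.shift hp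

theorem memE.sigmaSum_eq {r : ℕ} {W : D → ℕ} (hW : memE p D r W) (k : ι) :
    sigmaSum D W k = (p ^ r - 1) * phiMap p D r W k :=
  (Nat.mul_div_cancel' (hW.2 k).1).symm

theorem memE.mul_phiMap {n : ℕ} (hp : 1 < p) {W : D → ℕ} (hW : memE p D (n + 1) W) (k : ι) :
    p * phiMap p D (n + 1) W k = phiMap p D (n + 1) (shiftE p D (n + 1) W) k
      + sigmaSum D (psiMap p D (shiftE p D (n + 1) W)) k := by
  have hM : 0 < p ^ (n + 1) - 1 := Nat.sub_pos_of_lt (Nat.one_lt_pow n.succ_ne_zero hp)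
  apply Nat.eq_of_mul_eq_mul_left hM
  have h := mul_sigmaSum_eq_shiftE (by omega) hW.1 k
  rw [hW.sigmaSum_eq, (hW.shift (by omega)).sigmaSum_eq] at h
  rw [mul_add, ← h]
  ring

theorem density_mul_le_spU (hp : 1 < p) {r : ℕ} (hr : 0 < r) {W : D → ℕ}
    (hW : memE p D r W) : ((p : ℝ) - 1) * r * density p D ≤ spU p D W := by
  have hp' : (0 : ℝ) < p - 1 := sub_pos.mpr (by exact_mod_cast hp)
  have hr' : (0 : ℝ) < r := by exact_mod_cast hr
  have hs : (sDp p D r : ℝ) ≤ spU p D W := by exact_mod_cast Nat.sInf_le (by exact ⟨W, hW, rfl⟩)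
  rw [density]
  set S := {x : ℝ | ∃ r : ℕ, 1 ≤ r ∧ x = (sDp p D r : ℝ) / (r : ℝ)}
  have hinf : sInf S ≤ sDp p D r / r :=
    csInf_le ⟨0, by rintro _ ⟨r, -, rfl⟩; positivity⟩ (⟨r, hr, rfl⟩ : (sDp p D r : ℝ) / r ∈ S)
  calc ((p : ℝ) - 1) * r * (1 / ((p : ℝ) - 1) * sInf S) = r * sInf S := by field_simp
    _ ≤ r * (sDp p D r / r) := by gcongr
    _ = sDp p D r := by field_simp
    _ ≤ spU p D W := hs

end Solutions

section DigitPath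

variable {ι : Type} {p : ℕ} {D : Finset (ι → ℕ)}

/-- `W` is a digit path of length `r` from `a` to `b`: its base-`p` digits `v₀, …, v_{r-1}`
label steps `a = g₀ → g₁ → ⋯ → g_r = b` with `Σ_d v_{j,d} • d + g_j = p • g_{j+1}`, which
telescope to the defining identity. -/
def IsDigitPath (p : ℕ) (D : Finset (ι → ℕ)) (r : ℕ) (a b : ι → ℕ) (W : D → ℕ) : Prop :=
  (∀ d, W d < p ^ r) ∧ ∀ k, sigmaSum D W k + a k = p ^ r * b k

def concatPaths (p : ℕ) (D : Finset (ι → ℕ)) (r : ℕ → ℕ) (W : ℕ → D → ℕ) (n : ℕ) : D → ℕ :=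
  fun d => ∑ i ∈ Finset.range n, p ^ (∑ j ∈ Finset.range i, r j) * W i d

theorem concatPaths_zero (r : ℕ → ℕ) (W : ℕ → D → ℕ) : concatPaths p D r W 0 = 0 := rfl

theorem concatPaths_succ (r : ℕ → ℕ) (W : ℕ → D → ℕ) (n : ℕ) :
    concatPaths p D r W (n + 1) =
      fun d => concatPaths p D r W n d + p ^ (∑ i ∈ Finset.range n, r i) * W n d := by
  funext d
  exact Finset.sum_range_succ _ n

theorem concatPaths_one (v : ℕ → D → ℕ) (n : ℕ) :
    concatPaths p D (fun _ => 1) v n = fun d => ∑ i ∈ Finset.range n, p ^ i * v i d := by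
  unfold concatPaths
  simp

theorem IsDigitPath.append {r s : ℕ} {a b c : ι → ℕ} {W₁ W₂ : D → ℕ}
    (h₁ : IsDigitPath p D r a b W₁) (h₂ : IsDigitPath p D s b c W₂) :
    IsDigitPath p D (r + s) a c (fun d => W₁ d + p ^ r * W₂ d) := by
  refine ⟨fun d => ?_, fun k => ?_⟩
  · have h₂d := Nat.mul_le_mul_left (p ^ r) (h₂.1 d)
    rw [Nat.mul_succ] at h₂d
    show W₁ d + p ^ r * W₂ d < p ^ (r + s)
    have := h₁.1 d
    rw [pow_add]
    omega
  · rw [sigmaSum_add_mul, add_right_comm, h₁.2, ← mul_add, add_comm, h₂.2, pow_add, mul_assoc]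

theorem spU_add_pow_mul (hp : 1 < p) {r : ℕ} {W₁ W₂ : D → ℕ} (h : ∀ d, W₁ d < p ^ r) :
    spU p D (fun d => W₁ d + p ^ r * W₂ d) = spU p D W₁ + spU p D W₂ := by
  simp only [spU, sp_add_pow_mul hp (h _), Finset.sum_add_distrib]

theorem IsDigitPath.concat {r : ℕ → ℕ} {g : ℕ → ι → ℕ} {W : ℕ → D → ℕ} {n : ℕ}
    (h : ∀ i < n, IsDigitPath p D (r i) (g i) (g (i + 1)) (W i)) :
    IsDigitPath p D (∑ i ∈ Finset.range n, r i) (g 0) (g n) (concatPaths p D r W n) := by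
  induction n with
  | zero =>
    exact ⟨fun d => by simp [concatPaths_zero], fun k => by simp [concatPaths_zero, sigmaSum]⟩
  | succ n ih =>
    rw [concatPaths_succ, Finset.sum_range_succ]
    exact (ih fun i hi => h i (by omega)).append (h n (by omega))

theorem spU_concatPaths (hp : 1 < p) {r : ℕ → ℕ} {g : ℕ → ι → ℕ} {W : ℕ → D → ℕ} {n : ℕ}
    (h : ∀ i < n, IsDigitPath p D (r i) (g i) (g (i + 1)) (W i)) :
    spU p D (concatPaths p D r W n) = ∑ i ∈ Finset.range n, spU p D (W i) := by
  induction n with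
  | zero => simp [concatPaths_zero, spU, sp]
  | succ n ih =>
    have hprev := IsDigitPath.concat fun i (hi : i < n) => h i (by omega)
    rw [concatPaths_succ, spU_add_pow_mul hp hprev.1, ih fun i hi => h i (by omega),
      Finset.sum_range_succ]

theorem IsDigitPath.sum_pow_mul {g : ℕ → ι → ℕ} {v : ℕ → D → ℕ} {n : ℕ}
    (h : ∀ i < n, IsDigitPath p D 1 (g i) (g (i + 1)) (v i)) :
    IsDigitPath p D n (g 0) (g n) (fun d => ∑ i ∈ Finset.range n, p ^ i * v i d) := by
  simpa [concatPaths_one] using IsDigitPath.concat h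

theorem spU_sum_pow_mul (hp : 1 < p) {g : ℕ → ι → ℕ} {v : ℕ → D → ℕ} {n : ℕ}
    (h : ∀ i < n, IsDigitPath p D 1 (g i) (g (i + 1)) (v i)) :
    spU p D (fun d => ∑ i ∈ Finset.range n, p ^ i * v i d)
      = ∑ i ∈ Finset.range n, spU p D (v i) := by
  simpa [concatPaths_one] using spU_concatPaths hp h

theorem IsDigitPath.sigmaSum_eq {r : ℕ} {a : ι → ℕ} {W : D → ℕ} (h : IsDigitPath p D r a a W)
    (k : ι) : sigmaSum D W k = (p ^ r - 1) * a k := by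
  have := h.2 k
  rw [Nat.sub_mul, one_mul]
  omega

theorem IsDigitPath.memE (hp : 1 < p) {r : ℕ} {a : ι → ℕ} {W : D → ℕ}
    (h : IsDigitPath p D r a a W) (hr : 0 < r) (ha : ∀ k, 0 < a k) : memE p D r W := by
  have hM : 0 < p ^ r - 1 := Nat.sub_pos_of_lt (Nat.one_lt_pow hr.ne' hp)
  exact ⟨fun d => Nat.le_sub_one_of_lt (h.1 d), fun k =>
    ⟨h.sigmaSum_eq k ▸ dvd_mul_right _ _, h.sigmaSum_eq k ▸ Nat.mul_pos hM (ha k)⟩⟩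

theorem IsDigitPath.phiMap_eq (hp : 1 < p) {r : ℕ} {a : ι → ℕ} {W : D → ℕ}
    (h : IsDigitPath p D r a a W) (hr : 0 < r) : phiMap p D r W = a := by
  have hM : 0 < p ^ r - 1 := Nat.sub_pos_of_lt (Nat.one_lt_pow hr.ne' hp)
  funext k
  rw [phiMap, h.sigmaSum_eq, Nat.mul_div_cancel_left _ hM]

theorem IsDigitPath.density_mul_le_spU (hp : 1 < p) {r : ℕ} {a : ι → ℕ} {W : D → ℕ}
    (h : IsDigitPath p D r a a W) (ha : ∀ k, 0 < a k) :
    ((p : ℝ) - 1) * r * density p D ≤ spU p D W := by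
  rcases Nat.eq_zero_or_pos r with rfl | hr
  · simp
  · exact _root_.density_mul_le_spU hp hr (h.memE hp hr ha)

theorem spU_sum_pow_mul_le (hp : 1 < p) {l : ℕ} {g : ℕ → ι → ℕ} {v : ℕ → D → ℕ} {s : ℕ → ℕ}
    {T : ℕ → D → ℕ}
    (hstep : ∀ i < l, IsDigitPath p D 1 (g i) (g (i + 1)) (v i))
    (hret : ∀ i < l, IsDigitPath p D (s i) (g (i + 1)) (g i) (T i))
    (hloop : ∀ i < l,
      (spU p D (v i) + spU p D (T i) : ℝ) = ((p : ℝ) - 1) * (s i + 1 : ℕ) * density p D)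
    (hg : g l = g 0) (hpos : ∀ k, 0 < g 0 k) :
    (spU p D (fun d => ∑ i ∈ Finset.range l, p ^ i * v i d) : ℝ)
      ≤ ((p : ℝ) - 1) * l * density p D := by
  -- In reverse order the return paths chain up to a closed path `g l → ⋯ → g 0 = g l`.
  have hrev : ∀ i < l, IsDigitPath p D (s (l - 1 - i)) (g (l - i)) (g (l - (i + 1)))
      (T (l - 1 - i)) := fun i hi => by
    have := hret (l - 1 - i) (by omega)
    rw [show l - (i + 1) = l - 1 - i by omega]
    rwa [show l - 1 - i + 1 = l - i by omega] at this
  have hC := IsDigitPath.concat hrev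
  rw [Nat.sub_zero, Nat.sub_self, hg] at hC
  replace hC := hC.density_mul_le_spU hp hpos
  rw [spU_concatPaths hp hrev, Finset.sum_range_reflect (fun i => spU p D (T i)),
    Finset.sum_range_reflect s] at hC
  have hsum : (spU p D (fun d => ∑ i ∈ Finset.range l, p ^ i * v i d) : ℝ)
      + ∑ i ∈ Finset.range l, (spU p D (T i) : ℝ)
      = ((p : ℝ) - 1) * (∑ i ∈ Finset.range l, s i : ℕ) * density p D
        + ((p : ℝ) - 1) * l * density p D := by
    rw [spU_sum_pow_mul hp hstep, Nat.cast_sum, ← Finset.sum_add_distrib,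
      Finset.sum_congr rfl fun i hi => hloop i (Finset.mem_range.mp hi)]
    push_cast
    rw [← Finset.sum_mul, ← Finset.mul_sum, Finset.sum_add_distrib, Finset.sum_const,
      Finset.card_range, nsmul_one]
    ring
  push_cast at hC hsum
  linarith

end DigitPath

section MinimalIrreducible

variable {ι : Type} {p : ℕ} {D : Finset (ι → ℕ)}

theorem memE.phiMap_pos {r : ℕ} {W : D → ℕ} (hW : memE p D r W) (k : ι) :
    0 < phiMap p D r W k := by
  have := (hW.2 k).2
  rw [hW.sigmaSum_eq] at this
  exact Nat.pos_of_mul_pos_left this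

theorem memE.isDigitPath_psiMap (hp : 1 < p) {s : ℕ} {W : D → ℕ} (hW : memE p D (s + 1) W) :
    IsDigitPath p D 1 (phiMap p D (s + 1) W)
      (phiMap p D (s + 1) ((shiftE p D (s + 1))^[s] W)) (psiMap p D W) := by
  have hshift : shiftE p D (s + 1) ((shiftE p D (s + 1))^[s] W) = W := by
    funext d
    rw [← Function.iterate_succ_apply' (shiftE p D (s + 1)), shiftE_iterate_apply,
      shiftFun_iterate_self (by omega) (hW.1 d)]
  refine ⟨fun d => by rw [pow_one]; exact Nat.mod_lt _ (by omega), fun k => ?_⟩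
  have := (hW.iterate_shift (by omega) s).mul_phiMap hp k
  rw [hshift] at this
  rw [pow_one]
  omega

theorem memE.isDigitPath_div (hp : 1 < p) {s : ℕ} {W : D → ℕ} (hW : memE p D (s + 1) W) :
    IsDigitPath p D s (phiMap p D (s + 1) ((shiftE p D (s + 1))^[s] W))
      (phiMap p D (s + 1) W) (fun d => W d / p) := by
  have hpow := Nat.one_le_pow (s + 1) p (by omega)
  refine ⟨fun d => ?_, fun k => ?_⟩
  · have := hW.1 d
    rw [Nat.div_lt_iff_lt_mul (by omega), ← pow_succ]
    omega
  · apply Nat.eq_of_mul_eq_mul_left (by omega : 0 < p)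
    have hsplit : sigmaSum D W k
        = sigmaSum D (psiMap p D W) k + p * sigmaSum D (fun d => W d / p) k := by
      rw [← sigmaSum_add_mul]
      congr
      funext d
      exact (Nat.mod_add_div _ _).symm
    have hstep := (hW.isDigitPath_psiMap hp).2 k
    have hW' := hW.sigmaSum_eq k
    have hpow_mul : (p ^ (s + 1) - 1) * phiMap p D (s + 1) W k + phiMap p D (s + 1) W k
        = p * (p ^ s * phiMap p D (s + 1) W k) := by
      rw [Nat.sub_one_mul, Nat.sub_add_cancel (Nat.le_mul_of_pos_left _ hpow), pow_succ']
      ring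
    rw [pow_one] at hstep
    rw [mul_add, hpow_mul.symm]
    omega

theorem exists_isDigitPath_of_mem_Vset (hp : 1 < p) {e e' : ι → ℕ} {v : D → ℕ}
    (hv : v ∈ Vset p D e e') :
    (∀ k, 0 < e' k) ∧ ∃ s T, IsDigitPath p D 1 e' e v ∧ IsDigitPath p D s e e' T ∧
      (spU p D v + spU p D T : ℝ) = ((p : ℝ) - 1) * (s + 1 : ℕ) * density p D := by
  obtain ⟨r, hr, W, ⟨⟨hW, hmin⟩, -⟩, he, he', rfl⟩ := hv
  obtain ⟨s, rfl⟩ : ∃ s, r = s + 1 := ⟨r - 1, by omega⟩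
  simp only [suppMap, ZMod.val_neg_one, ZMod.val_zero, Function.iterate_zero_apply] at he he'
  subst he he'
  refine ⟨hW.phiMap_pos, s, fun d => W d / p, hW.isDigitPath_psiMap hp, hW.isDigitPath_div hp, ?_⟩
  have hsplit : W = fun d => psiMap p D W d + p ^ 1 * (W d / p) := by
    funext d
    rw [pow_one]
    exact (Nat.mod_add_div _ _).symm
  have hspU : spU p D W = spU p D (psiMap p D W) + spU p D (fun d => W d / p) := by
    conv_lhs => rw [hsplit]
    exact spU_add_pow_mul hp (hW.isDigitPath_psiMap hp).1
  rw [← hmin, hspU, Nat.cast_add]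

end MinimalIrreducible

section Rotation

variable {ι : Type} {p : ℕ} {D : Finset (ι → ℕ)}

theorem shiftE_sum_pow_mul {n : ℕ} {v : ℕ → D → ℕ} (hv : ∀ i d, v i d < p)
    (hper : ∀ i, v (i + (n + 1)) = v i) (m : ℕ) :
    shiftE p D (n + 1) (fun d => ∑ i ∈ Finset.range (n + 1), p ^ i * v (m + 1 + i) d)
      = fun d => ∑ i ∈ Finset.range (n + 1), p ^ i * v (m + i) d := by
  funext d
  rw [shiftE, Finset.sum_range_succ,
    shiftFun_add_pow_mul (sum_pow_mul_lt fun i _ => hv _ d) (hv _ d),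
    Finset.sum_range_succ', Finset.mul_sum, show m + 1 + n = m + (n + 1) by ring,
    hper, pow_zero, one_mul, add_zero]
  refine congrArg (· + v m d) (Finset.sum_congr rfl fun i _ => ?_)
  rw [pow_succ', show m + (i + 1) = m + 1 + i by ring, mul_assoc]

theorem shiftE_iterate_sum_pow_mul {n : ℕ} {v : ℕ → D → ℕ} (hv : ∀ i d, v i d < p)
    (hper : ∀ i, v (i + (n + 1)) = v i) (j m : ℕ) :
    (shiftE p D (n + 1))^[j] (fun d => ∑ i ∈ Finset.range (n + 1), p ^ i * v (m + j + i) d)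
      = fun d => ∑ i ∈ Finset.range (n + 1), p ^ i * v (m + i) d := by
  induction j generalizing m with
  | zero => rfl
  | succ j ih =>
    rw [Function.iterate_succ_apply, ← ih m, ← shiftE_sum_pow_mul hv hper (m + j)]
    rfl

theorem IsDigitPath.periodic {l : ℕ} (hl : 0 < l) {g : ℕ → ι → ℕ} {v : ℕ → D → ℕ}
    (h : ∀ i < l, IsDigitPath p D 1 (g i) (g (i + 1)) (v i)) (hg : g l = g 0) (i : ℕ) :
    IsDigitPath p D 1 (g (i % l)) (g ((i + 1) % l)) (v (i % l)) := by
  have hi := h (i % l) (Nat.mod_lt i hl)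
  rw [← Nat.mod_add_mod i l 1]
  by_cases hil : i % l + 1 = l
  · rw [hil] at hi
    rwa [hil, Nat.mod_self, ← hg]
  · rwa [Nat.mod_eq_of_lt (show i % l + 1 < l by have := Nat.mod_lt i hl; omega)]

theorem phiMap_shiftE_iterate_sum_pow_mul (hp : 1 < p) {l : ℕ} (hl : 0 < l) {g : ℕ → ι → ℕ}
    {v : ℕ → D → ℕ} (h : ∀ i < l, IsDigitPath p D 1 (g i) (g (i + 1)) (v i)) (hg : g l = g 0)
    {j : ℕ} (hj : j ≤ l) :
    phiMap p D l ((shiftE p D l)^[j] (fun d => ∑ i ∈ Finset.range l, p ^ i * v i d))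
      = g (l - j) := by
  obtain ⟨n, rfl⟩ : ∃ n, l = n + 1 := ⟨l - 1, by omega⟩
  -- Extended periodically, any `l` consecutive steps form a closed path, and `δ` moves the
  -- window of steps one place back.
  have hper := IsDigitPath.periodic hl h hg
  have hwindow : (fun d => ∑ i ∈ Finset.range (n + 1), p ^ i * v i d)
      = fun d => ∑ i ∈ Finset.range (n + 1), p ^ i * v ((n + 1 - j + j + i) % (n + 1)) d := by
    funext d
    refine Finset.sum_congr rfl fun i hi => ?_
    rw [Nat.sub_add_cancel hj, Nat.add_mod_left, Nat.mod_eq_of_lt (Finset.mem_range.mp hi)]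
  have hrot := shiftE_iterate_sum_pow_mul (p := p) (D := D) (v := fun i => v (i % (n + 1)))
    (fun i d => by simpa using (hper i).1 d) (fun i => congrArg v (Nat.add_mod_right i (n + 1)))
    j (n + 1 - j)
  beta_reduce at hrot
  rw [hwindow, hrot]
  have hclosed := IsDigitPath.sum_pow_mul (g := fun i => g ((n + 1 - j + i) % (n + 1)))
    (v := fun i => v ((n + 1 - j + i) % (n + 1))) (n := n + 1) fun i _ => hper _
  rw [add_zero, Nat.add_mod_right] at hclosed
  rw [hclosed.phiMap_eq hp hl]
  rcases Nat.eq_zero_or_pos j with rfl | hj0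
  · rw [Nat.sub_zero, Nat.mod_self, hg]
  · rw [Nat.mod_eq_of_lt (by omega)]

end Rotation

theorem digits_glue_minimal_general (p : ℕ) (hp : p.Prime) {ι : Type}
    (D : Finset (ι → ℕ))
    (l : ℕ) (hl : 1 ≤ l) (e : ℤ → (ι → ℕ))
    (hee : e (-1) = e ((l : ℤ) - 1))
    (V : ℕ → (D → ℕ))
    (hV : ∀ i : ℕ, i < l → V i ∈ Vset p D (e (i : ℤ)) (e ((i : ℤ) - 1)))
    (U : D → ℕ) (hU : U = fun d => ∑ i ∈ Finset.range l, p ^ i * V i d) :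
    minimalSol p D l U ∧
    ∀ i : ℕ, i < l → suppMap p D l U ((i : ℕ) : ZMod l) = e ((l : ℤ) - 1 - (i : ℤ)) := by
  have hp1 := hp.one_lt
  set g : ℕ → ι → ℕ := fun i => e ((i : ℤ) - 1)
  have hVg : ∀ i < l, V i ∈ Vset p D (g (i + 1)) (g i) := fun i hi => by simpa [g] using hV i hi
  choose! s T hstep hret hloop using
    fun i hi => (exists_isDigitPath_of_mem_Vset hp1 (hVg i hi)).2
  have hg : g l = g 0 := by simp [g, hee]
  have hpos : ∀ k, 0 < g 0 k := (exists_isDigitPath_of_mem_Vset hp1 (hVg 0 hl)).1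
  have hpath : IsDigitPath p D l (g 0) (g 0) U := hU ▸ hg ▸ IsDigitPath.sum_pow_mul hstep
  have hmem := hpath.memE hp1 hl hpos
  refine ⟨⟨hmem, le_antisymm ?_ (density_mul_le_spU hp1 hl hmem)⟩, fun i hi => ?_⟩
  · exact hU ▸ spU_sum_pow_mul_le hp1 hstep hret hloop hg hpos
  · rw [suppMap, ZMod.val_natCast_of_lt hi, hU,
      phiMap_shiftE_iterate_sum_pow_mul hp1 hl hstep hg hi.le]
    simp only [g]
    congr 1
    omega

/-- Given `e_{−1}, e_0, …, e_{l−1} ∈ Σ_p(D)` with `e_{−1} = e_{l−1}` and all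
`V(e_i, e_{i−1})` nonempty, and chosen `V_i ∈ V(e_i, e_{i−1})`, the tuple
`U = (Σ_i p^i v_{i,d})_d` is a minimal element of `E_{D,p}(l)` with support
`φ_U(i) = e_{l−1−i}`. -/
theorem digits_glue_minimal (p : ℕ) (hp : p.Prime) {ι : Type} [Fintype ι] [Nonempty ι]
    (D : Finset (ι → ℕ)) (hD : D.Nonempty)
    (hcoord : ∀ k : ι, ∃ d ∈ D, 0 < d k)
    (l : ℕ) (hl : 1 ≤ l) (e : ℤ → (ι → ℕ))
    (he : ∀ j : ℤ, -1 ≤ j → j ≤ (l : ℤ) - 1 → e j ∈ minSupport p D)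
    (hee : e (-1) = e ((l : ℤ) - 1))
    (V : ℕ → (D → ℕ))
    (hV : ∀ i : ℕ, i < l → V i ∈ Vset p D (e (i : ℤ)) (e ((i : ℤ) - 1)))
    (U : D → ℕ) (hU : U = fun d => ∑ i ∈ Finset.range l, p ^ i * V i d) :
    minimalSol p D l U ∧
    ∀ i : ℕ, i < l → suppMap p D l U ((i : ℕ) : ZMod l) = e ((l : ℤ) - 1 - (i : ℤ)) :=
  digits_glue_minimal_general p hp D l hl e hee V hV U hU
end

section
/- For every l ≥ 1 and every injection θ : ℤ/lℤ → (ℕ_{>0})^n, the cyclic minor M_θ satisfies ‖M_θ‖ ≤ p^{−m·l·δ_p(D)}. -/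
/-!
Expanding the product of the coefficients `f_{qθ(i) − θ(i+1)}` gives terms indexed by families of
solutions `Σ_d u_{i,d} d = q θ(i) − θ(i+1)`, and each term has norm at most `‖π‖ ^ Σ_i s_p(u_i)`
because `‖λ_u‖ ≤ ‖π‖ ^ s_p(u)` (Legendre's formula for `‖r!‖`). The combination
`U_d = Σ_i q^(l−1−i) u_{i,d}` telescopes to `Σ_d U_d d = (q^l − 1) θ(0)`, and folding the
base-`p^(ml)` blocks of each `U_d` yields an element of `E_{D,p}(ml)` of weight at most
`Σ_i s_p(u_i)`. That weight is therefore at least `s_{D,p}(ml) ≥ ml (p − 1) δ_p(D)`, and the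
ultrametric inequality bounds the whole sum by the largest term.
-/

open scoped BigOperators
open scoped Classical

variable {ι : Type} [Fintype ι]

/-- The coefficient `λ^{(m)}_u = Σ_{r+q·s=u} (−1)^s π^{r+s}/(r!·s!)` of the
splitting function `θ_m(X) = exp(πX − πX^q)`, where `q = p^m`. -/
noncomputable def lam {K : Type} [Field K] (p m : ℕ) (π : K) (u : ℕ) : K :=
  ∑ s ∈ Finset.range (u / p ^ m + 1),
    (-1 : K) ^ s * π ^ (u - p ^ m * s + s) /
      (((u - p ^ m * s).factorial : K) * (s.factorial : K))

/-- The coefficient `f^{(m)}_i(Γ) = Σ_{Σ_d u_d·d = i} Π_d λ^{(m)}_{u_d} γ_d^{u_d}`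
of the series `F_m(Γ, X)`.  (Since `0 ∉ D`, any solution of `Σ_d u_d·d = i`
satisfies `u_d ≤ Σ_k i_k` for every `d`, so the sum below ranges over all
solutions.) -/
noncomputable def fcoef {K : Type} [Field K] {ι : Type} [Fintype ι]
    (p m : ℕ) (π : K) (D : Finset (ι → ℕ)) (γ : D → K) (i : ι → ℕ) : K :=
  ∑ u ∈ (Fintype.piFinset fun _ : D => Finset.range ((∑ k, i k) + 1)) |>.filter
      (fun u : D → ℕ => ∀ k, sigmaSum D u k = i k),
    ∏ d, lam p m π (u d) * γ d ^ u d

/-- `f^{(m)}_i(Γ)` for `i ∈ ℤ^n`: it is `0` whenever `i` has a negative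
coordinate. -/
noncomputable def fcoefZ {K : Type} [Field K] {ι : Type} [Fintype ι]
    (p m : ℕ) (π : K) (D : Finset (ι → ℕ)) (γ : D → K) (i : ι → ℤ) : K :=
  if ∀ k, 0 ≤ i k then fcoef p m π D γ (fun k => (i k).toNat) else 0

open Finset
open scoped Nat

section DigitSum

variable {p : ℕ}

lemma sp_eq_mod_add_sp_div (hp : 1 < p) (n : ℕ) : sp p n = n % p + sp p (n / p) := by
  rcases Nat.eq_zero_or_pos n with rfl | hn
  · simp [sp]
  · rw [sp, Nat.digits_def' hp hn, List.sum_cons]; rfl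

lemma sp_pow_mul (hp : 1 < p) (k n : ℕ) : sp p (p ^ k * n) = sp p n := by
  rcases Nat.eq_zero_or_pos n with rfl | hn
  · simp
  · simp [sp, Nat.digits_base_pow_mul hp hn]

lemma sp_eq_sp_mod_add_sp_div_pow (hp : 1 < p) (r n : ℕ) :
    sp p n = sp p (n % p ^ r) + sp p (n / p ^ r) := by
  induction r generalizing n with
  | zero => simp [sp, Nat.mod_one]
  | succ r ih =>
    have hmod : n % p ^ (r + 1) % p = n % p := Nat.mod_mod_of_dvd n (dvd_pow_self p r.succ_ne_zero)
    have hdiv : n % p ^ (r + 1) / p = n / p % p ^ r := by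
      rw [pow_succ']; exact Nat.mod_mul_right_div_self n p (p ^ r)
    rw [sp_eq_mod_add_sp_div hp n, ih (n / p), sp_eq_mod_add_sp_div hp (n % p ^ (r + 1)), hmod,
      hdiv, Nat.div_div_eq_div_mul, ← pow_succ', add_assoc]

/-- Legendre's formula turns subadditivity of `sp` into `a! * b! ∣ (a + b)!`. -/
lemma sp_add_le (hp : p.Prime) (a b : ℕ) : sp p (a + b) ≤ sp p a + sp p b := by
  have : Fact p.Prime := ⟨hp⟩
  have hv : padicValNat p a ! + padicValNat p b ! ≤ padicValNat p (a + b)! := by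
    rw [← padicValNat_dvd_iff_le (Nat.factorial_ne_zero _), pow_add]
    exact (mul_dvd_mul pow_padicValNat_dvd pow_padicValNat_dvd).trans
      (Nat.factorial_mul_factorial_dvd_factorial_add a b)
  have h := Nat.mul_le_mul_left (p - 1) hv
  rw [mul_add, sub_one_mul_padicValNat_factorial, sub_one_mul_padicValNat_factorial,
    sub_one_mul_padicValNat_factorial] at h
  have := Nat.digit_sum_le p a
  have := Nat.digit_sum_le p b
  have := Nat.digit_sum_le p (a + b)
  unfold sp
  omega

lemma sp_sum_le (hp : p.Prime) {α : Type*} (s : Finset α) (f : α → ℕ) :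
    sp p (∑ i ∈ s, f i) ≤ ∑ i ∈ s, sp p (f i) :=
  le_sum_of_subadditive _ (by simp [sp]) (sp_add_le hp) s f

/-- Folding `n = a + p^r b ↦ a + b` preserves the class mod `p^r - 1` and does not increase `sp`. -/
lemma exists_le_modEq_sp_le (hp : p.Prime) {r : ℕ} (hr : 1 ≤ r) (n : ℕ) :
    ∃ n' ≤ p ^ r - 1, n' ≡ n [MOD p ^ r - 1] ∧ sp p n' ≤ sp p n ∧ (n' = 0 ↔ n = 0) := by
  have hpr : 2 ≤ p ^ r := hp.two_le.trans (Nat.le_self_pow (by omega) p)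
  induction n using Nat.strong_induction_on with
  | _ n ih =>
    by_cases hn : n ≤ p ^ r - 1
    · exact ⟨n, hn, rfl, le_rfl, Iff.rfl⟩
    set a := n % p ^ r
    set b := n / p ^ r
    have hn_eq : a + p ^ r * b = n := Nat.mod_add_div n (p ^ r)
    have hb : 1 ≤ b := (Nat.one_le_div_iff (by omega)).mpr (by omega)
    have hlt : a + b < n := by nlinarith
    have hmod : a + b ≡ n [MOD p ^ r - 1] := by
      have h1 : 1 ≡ p ^ r [MOD p ^ r - 1] := (Nat.modEq_iff_dvd' (by omega)).mpr dvd_rfl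
      calc a + b = a + 1 * b := by ring
        _ ≡ a + p ^ r * b [MOD p ^ r - 1] := (h1.mul_right b).add_left a
        _ = n := hn_eq
    have hsp : sp p (a + b) ≤ sp p n :=
      (sp_add_le hp a b).trans (sp_eq_sp_mod_add_sp_div_pow hp.one_lt r n).ge
    obtain ⟨n', hn'le, hn'mod, hn'sp, hn'0⟩ := ih _ hlt
    have hab : a + b ≠ 0 := (Nat.add_pos_right a hb).ne'
    exact ⟨n', hn'le, hn'mod.trans hmod, hn'sp.trans hsp,
      iff_of_false (fun h => hab (hn'0.mp h)) (by omega)⟩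

end DigitSum

section Norm

variable {K : Type*} [NormedField K] {p : ℕ}

lemma norm_natCast_eq_one_of_not_dvd [IsUltrametricDist K] (hp : p.Prime) (hpK : ‖(p : K)‖ < 1)
    {c : ℕ} (hc : ¬ p ∣ c) : ‖(c : K)‖ = 1 := by
  refine le_antisymm (IsUltrametricDist.norm_natCast_le_one K c) (not_lt.mp fun hcK => ?_)
  obtain ⟨a, b, hab⟩ : IsCoprime (p : ℤ) c := by
    rw [Int.isCoprime_iff_gcd_eq_one, Int.gcd_natCast_natCast]
    exact (Nat.Prime.coprime_iff_not_dvd hp).mpr hc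
  have h1 : ((a * p + b * c : ℤ) : K) = 1 := by rw [hab, Int.cast_one]
  push_cast at h1
  have hlt : ∀ (z : ℤ) (x : K), ‖x‖ < 1 → ‖(z : K) * x‖ < 1 := fun z x hx => by
    rw [norm_mul]
    exact (mul_le_of_le_one_left (norm_nonneg x)
      (IsUltrametricDist.norm_intCast_le_one K z)).trans_lt hx
  have := (IsUltrametricDist.norm_add_le_max ((a : K) * p) (b * c)).trans_lt
    (max_lt (hlt a _ hpK) (hlt b _ hcK))
  rw [h1, norm_one] at this
  exact lt_irrefl 1 this

lemma norm_natCast_eq_pow_padicValNat [IsUltrametricDist K] (hp : p.Prime) (hpK : ‖(p : K)‖ < 1)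
    {n : ℕ} (hn : n ≠ 0) : ‖(n : K)‖ = ‖(p : K)‖ ^ padicValNat p n := by
  have : Fact p.Prime := ⟨hp⟩
  have hsplit : p ^ padicValNat p n * (n / p ^ padicValNat p n) = n :=
    Nat.mul_div_cancel' pow_padicValNat_dvd
  have hc : ¬ p ∣ n / p ^ padicValNat p n := by
    rw [← Nat.factorization_def n hp]; exact Nat.not_dvd_ordCompl hp hn
  rw [← hsplit, Nat.cast_mul, norm_mul, Nat.cast_pow, norm_pow,
    norm_natCast_eq_one_of_not_dvd hp hpK hc, mul_one, hsplit]

variable {π : K}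

lemma norm_pi_pow_eq_norm_p (hπ : π ^ (p - 1) = -(p : K)) : ‖π‖ ^ (p - 1) = ‖(p : K)‖ := by
  rw [← norm_pow, hπ, norm_neg]

lemma norm_pi_le_one (hp : p.Prime) (hpnorm : ‖(p : K)‖ = (p : ℝ)⁻¹)
    (hπ : π ^ (p - 1) = -(p : K)) : ‖π‖ ≤ 1 := by
  refine (pow_le_one_iff_of_nonneg (norm_nonneg π) (Nat.sub_ne_zero_of_lt hp.one_lt)).mp ?_
  rw [norm_pi_pow_eq_norm_p hπ, hpnorm]
  exact inv_le_one_of_one_le₀ (by exact_mod_cast hp.one_le)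

lemma norm_pi_pow_eq_rpow (hp : p.Prime) (hpnorm : ‖(p : K)‖ = (p : ℝ)⁻¹)
    (hπ : π ^ (p - 1) = -(p : K)) (n : ℕ) :
    ‖π‖ ^ n = (p : ℝ) ^ (-(n : ℝ) / ((p : ℝ) - 1)) := by
  have hp0 : (0 : ℝ) ≤ p := Nat.cast_nonneg p
  have hπ1 : ‖π‖ = (p : ℝ) ^ (-((p : ℝ) - 1)⁻¹) := by
    rw [← Real.pow_rpow_inv_natCast (norm_nonneg π) (Nat.sub_ne_zero_of_lt hp.one_lt),
      norm_pi_pow_eq_norm_p hπ, hpnorm, Nat.cast_sub hp.one_le, Nat.cast_one, Real.rpow_neg hp0,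
      Real.inv_rpow hp0]
  rw [hπ1, ← Real.rpow_mul_natCast hp0]
  ring_nf

lemma norm_factorial_eq [IsUltrametricDist K] (hp : p.Prime) (hpK : ‖(p : K)‖ < 1)
    (hπ : π ^ (p - 1) = -(p : K)) (n : ℕ) : ‖(n ! : K)‖ = ‖π‖ ^ (n - sp p n) := by
  have : Fact p.Prime := ⟨hp⟩
  rw [norm_natCast_eq_pow_padicValNat hp hpK (Nat.factorial_ne_zero n),
    ← norm_pi_pow_eq_norm_p hπ, ← pow_mul, sub_one_mul_padicValNat_factorial, sp]

end Norm

lemma IsUltrametricDist.norm_prod_sum_le_of_forall_le {R : Type*} [NormedCommRing R]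
    [IsUltrametricDist R] {α β : Type*} [Inhabited β] (s : Finset α) (t : α → Finset β)
    (f : α → β → R) {B : ℝ} (hB : 0 ≤ B)
    (h : ∀ g : α → β, (∀ i ∈ s, g i ∈ t i) → ‖∏ i ∈ s, f i (g i)‖ ≤ B) :
    ‖∏ i ∈ s, ∑ j ∈ t i, f i j‖ ≤ B := by
  rw [prod_sum]
  refine IsUltrametricDist.norm_sum_le_of_forall_le_of_nonneg hB fun F hF => ?_
  let g : α → β := fun i => if hi : i ∈ s then F i hi else default
  have hg : ∀ i (hi : i ∈ s), g i = F i hi := fun i hi => dif_pos hi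
  have hprod : ∏ i ∈ s.attach, f i (F i i.2) = ∏ i ∈ s, f i (g i) := by
    rw [← prod_attach s fun i => f i (g i)]
    exact prod_congr rfl fun i _ => by rw [hg]
  rw [hprod]
  exact h g fun i hi => hg i hi ▸ mem_pi.mp hF i hi

section Lam

variable {K : Type} [NormedField K] [IsUltrametricDist K] {p : ℕ} {π : K}

/-- Each term of `λ_u` is `±π^(r+s)/(r! s!)` with `r + q s = u`, of norm `‖π‖^(sp r + sp s)`. -/
lemma norm_lam_le (hp : p.Prime) (hpnorm : ‖(p : K)‖ = (p : ℝ)⁻¹)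
    (hπ : π ^ (p - 1) = -(p : K)) (m u : ℕ) : ‖lam p m π u‖ ≤ ‖π‖ ^ sp p u := by
  have hpK : ‖(p : K)‖ < 1 := by
    rw [hpnorm]; exact inv_lt_one_of_one_lt₀ (by exact_mod_cast hp.one_lt)
  have hπ0 : ‖π‖ ≠ 0 := by
    rw [← pow_ne_zero_iff (Nat.sub_ne_zero_of_lt hp.one_lt), norm_pi_pow_eq_norm_p hπ, hpnorm]
    exact inv_ne_zero (by exact_mod_cast hp.ne_zero)
  refine IsUltrametricDist.norm_sum_le_of_forall_le_of_nonneg (by positivity) fun s hs => ?_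
  set r := u - p ^ m * s
  have hru : r + p ^ m * s = u := by
    have := (Nat.le_div_iff_mul_le (pow_pos hp.pos m)).mp (Nat.lt_succ_iff.mp (mem_range.mp hs))
    rw [mul_comm] at this
    omega
  have hr := Nat.digit_sum_le p r
  have hs := Nat.digit_sum_le p s
  have hterm :
      ‖(-1 : K) ^ s * π ^ (r + s) / ((r ! : K) * (s ! : K))‖ = ‖π‖ ^ (sp p r + sp p s) := by
    rw [norm_div, norm_mul, norm_mul, norm_pow, norm_neg, norm_one, one_pow, one_mul, norm_pow,
      norm_factorial_eq hp hpK hπ, norm_factorial_eq hp hpK hπ, ← pow_add,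
      div_eq_iff (pow_ne_zero _ hπ0), ← pow_add]
    unfold sp at *
    congr 1
    omega
  rw [hterm]
  refine pow_le_pow_of_le_one (norm_nonneg π) (norm_pi_le_one hp hpnorm hπ) ?_
  calc sp p u = sp p (r + p ^ m * s) := by rw [hru]
    _ ≤ sp p r + sp p (p ^ m * s) := sp_add_le hp _ _
    _ = sp p r + sp p s := by rw [sp_pow_mul hp.one_lt]

omit [Fintype ι] in
lemma norm_prod_lam_mul_pow_le (hp : p.Prime) (hpnorm : ‖(p : K)‖ = (p : ℝ)⁻¹)
    (hπ : π ^ (p - 1) = -(p : K)) (m : ℕ) (D : Finset (ι → ℕ)) (γ : D → K)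
    (hγ : ∀ d, ‖γ d‖ ≤ 1) (u : D → ℕ) :
    ‖∏ d, lam p m π (u d) * γ d ^ u d‖ ≤ ‖π‖ ^ spU p D u := by
  rw [norm_prod, spU, ← prod_pow_eq_pow_sum]
  refine prod_le_prod (fun _ _ => norm_nonneg _) fun d _ => ?_
  rw [norm_mul, norm_pow]
  exact (mul_le_of_le_one_right (norm_nonneg _) (pow_le_one₀ (norm_nonneg _) (hγ d))).trans
    (norm_lam_le hp hpnorm hπ m (u d))

lemma norm_prod_fcoef_le (hp : p.Prime) (hpnorm : ‖(p : K)‖ = (p : ℝ)⁻¹)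
    (hπ : π ^ (p - 1) = -(p : K)) (m : ℕ) (D : Finset (ι → ℕ)) (γ : D → K)
    (hγ : ∀ d, ‖γ d‖ ≤ 1) {α : Type*} (s : Finset α) (e : α → ι → ℕ) {n : ℕ}
    (hn : ∀ u : α → D → ℕ, (∀ i ∈ s, ∀ k, sigmaSum D (u i) k = e i k) →
      n ≤ ∑ i ∈ s, spU p D (u i)) :
    ‖∏ i ∈ s, fcoef p m π D γ (e i)‖ ≤ ‖π‖ ^ n := by
  unfold fcoef
  refine IsUltrametricDist.norm_prod_sum_le_of_forall_le _ _ _ (by positivity) fun u hu => ?_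
  rw [norm_prod]
  calc ∏ i ∈ s, ‖∏ d, lam p m π (u i d) * γ d ^ u i d‖
      ≤ ∏ i ∈ s, ‖π‖ ^ spU p D (u i) := prod_le_prod (fun _ _ => norm_nonneg _)
        fun i _ => norm_prod_lam_mul_pow_le hp hpnorm hπ m D γ hγ (u i)
    _ = ‖π‖ ^ ∑ i ∈ s, spU p D (u i) := prod_pow_eq_pow_sum _ _ _
    _ ≤ ‖π‖ ^ n := pow_le_pow_of_le_one (norm_nonneg π) (norm_pi_le_one hp hpnorm hπ)
        (hn u fun i hi => (mem_filter.mp (hu i hi)).2)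

end Lam

lemma fcoefZ_eq_fcoef_toNat {K : Type} [Field K] (p m : ℕ) (π : K) (D : Finset (ι → ℕ))
    (γ : D → K) {i : ι → ℤ} (hi : ∀ k, 0 ≤ i k) :
    fcoefZ p m π D γ i = fcoef p m π D γ (fun k => (i k).toNat) :=
  if_pos hi

lemma sum_range_pow_mul_sub {R : Type*} [CommRing R] (q : R) (a : ℕ → R) (l : ℕ) :
    ∑ i ∈ range l, q ^ (l - 1 - i) * (q * a i - a (i + 1)) = q ^ l * a 0 - a l := by
  induction l generalizing a with
  | zero => simp
  | succ l ih =>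
    have hshift := ih fun j => a (j + 1)
    rw [sum_range_succ',
      sum_congr rfl fun i _ => by rw [show l + 1 - 1 - (i + 1) = l - 1 - i by omega],
      hshift, Nat.add_sub_cancel, Nat.sub_zero]
    ring

section Solutions

omit [Fintype ι]

variable {p : ℕ} {D : Finset (ι → ℕ)}

lemma sigmaSum_sum_mul {α : Type*} (s : Finset α) (c : α → ℕ) (u : α → D → ℕ) (k : ι) :
    sigmaSum D (fun d => ∑ i ∈ s, c i * u i d) k = ∑ i ∈ s, c i * sigmaSum D (u i) k := by
  simp only [sigmaSum, sum_mul, mul_sum, mul_assoc]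
  exact sum_comm

lemma sigmaSum_modEq {n : ℕ} {U V : D → ℕ} (h : ∀ d, U d ≡ V d [MOD n]) (k : ι) :
    sigmaSum D U k ≡ sigmaSum D V k [MOD n] :=
  Nat.ModEq.sum fun d _ => (h d).mul_right _

lemma sigmaSum_cyclic {q l : ℕ} (hq : 1 ≤ q) (θ : ZMod l → ι → ℕ) (u : ℕ → D → ℕ)
    (hu : ∀ i ∈ range l, ∀ k, (sigmaSum D (u i) k : ℤ) = q * θ i k - θ ((i : ZMod l) + 1) k)
    (k : ι) :
    sigmaSum D (fun d => ∑ i ∈ range l, q ^ (l - 1 - i) * u i d) k = (q ^ l - 1) * θ 0 k := by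
  zify [Nat.one_le_pow l q hq]
  rw [sigmaSum_sum_mul]
  push_cast
  rw [sum_congr rfl fun i hi => by rw [hu i hi k, ← Nat.cast_succ],
    sum_range_pow_mul_sub (q : ℤ) (fun i => (θ i k : ℤ)), ZMod.natCast_self, Nat.cast_zero]
  ring

lemma sDp_le_spU (hp : p.Prime) {r : ℕ} (hr : 1 ≤ r) (U : D → ℕ)
    (hU : ∀ k, p ^ r - 1 ∣ sigmaSum D U k ∧ 0 < sigmaSum D U k) : sDp p D r ≤ spU p D U := by
  choose V hVle hVmod hVsp hV0 using fun d => exists_le_modEq_sp_le hp hr (U d)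
  have hV : memE p D r V := by
    refine ⟨hVle, fun k => ⟨((sigmaSum_modEq hVmod k).dvd_iff dvd_rfl).mpr (hU k).1, ?_⟩⟩
    obtain ⟨d, -, hd⟩ := exists_ne_zero_of_sum_ne_zero (hU k).2.ne'
    refine Nat.pos_of_ne_zero fun h => hd ?_
    rcases mul_eq_zero.mp (sum_eq_zero_iff.mp h d (mem_univ d)) with h0 | h0
    · rw [(hV0 d).mp h0, zero_mul]
    · rw [h0, mul_zero]
  exact (Nat.sInf_le ⟨V, hV, rfl⟩ : sDp p D r ≤ spU p D V).trans (sum_le_sum fun d _ => hVsp d)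

lemma sDp_le_sum_spU_of_cyclic (hp : p.Prime) {m l : ℕ} (hm : 1 ≤ m) (hl : 1 ≤ l)
    (θ : ZMod l → ι → ℕ) (hθpos : ∀ j k, 0 < θ j k) (u : ℕ → D → ℕ)
    (hu : ∀ i ∈ range l, ∀ k,
      (sigmaSum D (u i) k : ℤ) = (p : ℤ) ^ m * θ i k - θ ((i : ZMod l) + 1) k) :
    sDp p D (m * l) ≤ ∑ i ∈ range l, spU p D (u i) := by
  set U : D → ℕ := fun d => ∑ i ∈ range l, (p ^ m) ^ (l - 1 - i) * u i d
  have hU : ∀ k, sigmaSum D U k = (p ^ (m * l) - 1) * θ 0 k := fun k => by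
    rw [pow_mul]
    exact sigmaSum_cyclic (Nat.one_le_pow _ _ hp.pos) θ u (by exact_mod_cast hu) k
  have hml : m * l ≠ 0 := by positivity
  have hpml : 1 < p ^ (m * l) := Nat.one_lt_pow hml hp.one_lt
  calc sDp p D (m * l) ≤ spU p D U := sDp_le_spU hp (Nat.one_le_iff_ne_zero.mpr hml) U
        fun k => ⟨hU k ▸ dvd_mul_right _ _, hU k ▸ Nat.mul_pos (by omega) (hθpos 0 k)⟩
    _ ≤ ∑ d, ∑ i ∈ range l, sp p (u i d) := sum_le_sum fun d _ =>
        (sp_sum_le hp _ _).trans_eq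
          (sum_congr rfl fun i _ => by rw [← pow_mul, sp_pow_mul hp.one_lt])
    _ = ∑ i ∈ range l, spU p D (u i) := sum_comm

lemma mul_density_le {p : ℕ} (hp : 1 ≤ p) (D : Finset (ι → ℕ)) {r : ℕ} (hr : 1 ≤ r) :
    (r : ℝ) * density p D ≤ sDp p D r / ((p : ℝ) - 1) := by
  have hbdd : BddBelow {x : ℝ | ∃ r, 1 ≤ r ∧ x = sDp p D r / r} :=
    ⟨0, by rintro _ ⟨r, -, rfl⟩; positivity⟩
  have hle := csInf_le hbdd ⟨r, hr, rfl⟩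
  have hp1 : (0 : ℝ) ≤ p - 1 := by rw [sub_nonneg]; exact_mod_cast hp
  have hr0 : (0 : ℝ) < r := by exact_mod_cast hr
  rw [density, mul_left_comm, one_div_mul_eq_div]
  exact div_le_div_of_nonneg_right ((le_div_iff₀' hr0).mp hle) hp1

end Solutions

theorem cyclic_minor_bound_general (p m : ℕ) (hp : p.Prime) (hm : 1 ≤ m)
    {K : Type} [NormedField K]
    (hna : IsUltrametricDist K) (hpnorm : ‖(p : K)‖ = (p : ℝ)⁻¹)
    (π : K) (hπ : π ^ (p - 1) = -(p : K))
    {ι : Type} [Fintype ι]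
    (D : Finset (ι → ℕ))
    (γ : D → K) (hγ : ∀ d, ‖γ d‖ ≤ 1)
    (l : ℕ) (hl : 1 ≤ l) (θ : ZMod l → (ι → ℕ))
    (hθpos : ∀ j k, 0 < θ j k) :
    ‖(-1 : K) ^ (l - 1) *
        ∏ i ∈ Finset.range l,
          fcoefZ p m π D γ
            (fun k => (p : ℤ) ^ m * (θ (i : ZMod l) k : ℤ) - (θ ((i : ZMod l) + 1) k : ℤ))‖ ≤
      (p : ℝ) ^ (-((m : ℝ) * (l : ℝ) * density p D)) := by
  have := hna
  rw [norm_mul, norm_pow, norm_neg, norm_one, one_pow, one_mul]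
  by_cases hnonneg : ∀ i ∈ range l, ∀ k,
      (0 : ℤ) ≤ (p : ℤ) ^ m * (θ (i : ZMod l) k : ℤ) - (θ ((i : ZMod l) + 1) k : ℤ)
  swap
  · push Not at hnonneg
    obtain ⟨i, hi, k, hk⟩ := hnonneg
    rw [prod_eq_zero hi (if_neg fun h => absurd (h k) (not_le.mpr hk)), norm_zero]
    positivity
  rw [prod_congr rfl fun i hi => fcoefZ_eq_fcoef_toNat p m π D γ (hnonneg i hi)]
  calc _ ≤ ‖π‖ ^ sDp p D (m * l) := norm_prod_fcoef_le hp hpnorm hπ m D γ hγ _ _ fun u hu =>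
        sDp_le_sum_spU_of_cyclic hp hm hl θ hθpos u fun i hi k => by
          rw [hu i hi k, Int.toNat_of_nonneg (hnonneg i hi k)]
    _ = (p : ℝ) ^ (-(sDp p D (m * l) : ℝ) / ((p : ℝ) - 1)) := norm_pi_pow_eq_rpow hp hpnorm hπ _
    _ ≤ (p : ℝ) ^ (-((m : ℝ) * (l : ℝ) * density p D)) := by
        rw [neg_div]
        refine Real.rpow_le_rpow_of_exponent_le (by exact_mod_cast hp.one_le) (neg_le_neg ?_)
        exact_mod_cast mul_density_le hp.one_le D (Nat.one_le_iff_ne_zero.mpr (by positivity))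

/-- Valuation bound for a cyclic minor: for any injection `θ : ℤ/lℤ → (ℕ_{>0})^n`,
`‖M_θ‖ ≤ p^{−m·l·δ_p(D)}`, i.e. `M_θ ≡ 0 mod π^{m·l·(p−1)·δ_p(D)}`. -/
theorem cyclic_minor_bound (p m : ℕ) (hp : p.Prime) (hm : 1 ≤ m)
    {K : Type} [NormedField K] [CharZero K]
    (hna : IsUltrametricDist K) (hpnorm : ‖(p : K)‖ = (p : ℝ)⁻¹)
    (π : K) (hπ : π ^ (p - 1) = -(p : K))
    {ι : Type} [Fintype ι] [Nonempty ι]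
    (D : Finset (ι → ℕ)) (hD : D.Nonempty) (h0D : (fun _ => 0) ∉ D)
    (hcoord : ∀ k : ι, ∃ d ∈ D, 0 < d k)
    (γ : D → K) (hγ : ∀ d, ‖γ d‖ ≤ 1)
    (l : ℕ) (hl : 1 ≤ l) (θ : ZMod l → (ι → ℕ))
    (hθinj : Function.Injective θ) (hθpos : ∀ j k, 0 < θ j k) :
    ‖(-1 : K) ^ (l - 1) *
        ∏ i ∈ Finset.range l,
          fcoefZ p m π D γ
            (fun k => (p : ℤ) ^ m * (θ (i : ZMod l) k : ℤ) - (θ ((i : ZMod l) + 1) k : ℤ))‖ ≤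
      (p : ℝ) ^ (-((m : ℝ) * (l : ℝ) * density p D)) :=
  cyclic_minor_bound_general p m hp hm hna hpnorm π hπ D γ hγ l hl θ hθpos
end
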